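/- arXiv:1810.11084 — 7 statements merged into one kernel-verified Lean document; each statement's English description precedes it below -/
import Mathlib

section
/- Let n ≥ 2 and 0 ≤ p, q ≤ n. The number of pairs (I, J) of subsets of {1,…,n} with |I| = p, |J| = q such that for every m ∈ (ℤ/2ℤ)ⁿ with m₁ + ⋯ + mₙ = 0 one has Σ_{i∈I} m_i = Σ_{j∈J} m_j in ℤ/2ℤ, equals: 2·C(n,p) if p = q and p + q = n; C(n,p) if p = q and p + q ≠ n, or if p + q = n and p ≠ q; and 0 otherwise. (Here C(n,p) denotes the binomial coefficient.) -/
/-! In characteristic 2, `∑_I m = ∑_J m` says `∑_{I ∆ J} m = 0`. Testing against the vectors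
with exactly two nonzero entries `1` shows that a set `S` with `∑_S m = 0` for all `m` of total sum
zero is `∅` or everything, so the admissible pairs are exactly `(I, I)` and `(I, Iᶜ)`; these two
families are disjoint as soon as `n ≠ 0`, and each has `C(n, p)` members with `|I| = p`. -/

open Finset
open scoped symmDiff

section CharacteristicTwo

variable {R ι : Type*} [Ring R] [CharP R 2]

theorem Finset.sum_symmDiff_of_charTwo [DecidableEq ι] (s t : Finset ι) (f : ι → R) :
    ∑ i ∈ s ∆ t, f i = ∑ i ∈ s, f i + ∑ i ∈ t, f i := by
  rw [← sum_union_inter, ← sup_eq_union, ← symmDiff_sup_inf s t, sup_eq_union,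
    sum_union (disjoint_symmDiff_inf s t), inf_eq_inter, add_assoc, CharTwo.add_self_eq_zero,
    add_zero]

variable [Nontrivial R] [Fintype ι] [DecidableEq ι]

theorem forall_sum_eq_zero_imp_sum_eq_zero_iff (S : Finset ι) :
    (∀ m : ι → R, ∑ i, m i = 0 → ∑ i ∈ S, m i = 0) ↔ S = ∅ ∨ S = univ := by
  refine ⟨fun h => ?_, ?_⟩
  · by_contra! hS
    obtain ⟨a, ha⟩ := hS.1
    obtain ⟨b, hb⟩ := not_forall.mp (mt eq_univ_iff_forall.mpr hS.2)
    have := h (Pi.single a 1 + Pi.single b 1) ?_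
    · simp [sum_add_distrib, ha, hb] at this
    · simp [sum_add_distrib, CharTwo.add_self_eq_zero]
  · rintro (rfl | rfl) m hm
    · exact sum_empty
    · exact hm

theorem forall_sum_eq_zero_imp_sum_eq_sum_iff (I J : Finset ι) :
    (∀ m : ι → R, ∑ i, m i = 0 → ∑ i ∈ I, m i = ∑ j ∈ J, m j) ↔ J = I ∨ J = Iᶜ := by
  have h_sum_eq_iff (m : ι → R) : ∑ i ∈ I, m i = ∑ j ∈ J, m j ↔ ∑ i ∈ I ∆ J, m i = 0 := by
    rw [sum_symmDiff_of_charTwo, CharTwo.add_eq_zero]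
  simp only [h_sum_eq_iff]
  rw [forall_sum_eq_zero_imp_sum_eq_zero_iff, ← bot_eq_empty, ← top_eq_univ, symmDiff_eq_bot,
    symmDiff_eq_top, eq_compl_iff_isCompl, isCompl_comm, eq_comm]

end CharacteristicTwo

theorem ncard_setOf_card_eq_and_snd_eq {ι : Type*} [Fintype ι] (p : ℕ)
    (f : Finset ι → Finset ι) (P : Prop) [Decidable P] :
    {IJ : Finset ι × Finset ι | IJ.1.card = p ∧ IJ.2 = f IJ.1 ∧ P}.ncard =
      if P then (Fintype.card ι).choose p else 0 := by
  split_ifs with hP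
  · have : {IJ : Finset ι × Finset ι | IJ.1.card = p ∧ IJ.2 = f IJ.1 ∧ P} =
        (fun I => (I, f I)) '' (powersetCard p (univ : Finset ι) : Set (Finset ι)) := by
      ext ⟨I, J⟩
      simp [hP, eq_comm]
    rw [this, Set.ncard_image_of_injective _ (fun I K h => congrArg Prod.fst h),
      Set.ncard_coe_finset, card_powersetCard, card_univ]
  · simp [hP]

theorem stmt_2_general (n p q : ℕ) (hn : 2 ≤ n) :
    {IJ : Finset (Fin n) × Finset (Fin n) |
        IJ.1.card = p ∧ IJ.2.card = q ∧
        ∀ m : Fin n → ZMod 2, ∑ i, m i = 0 →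
          ∑ i ∈ IJ.1, m i = ∑ j ∈ IJ.2, m j}.ncard =
      if p = q ∧ p + q = n then 2 * n.choose p
      else if p = q ∨ p + q = n then n.choose p
      else 0 := by
  have : Nonempty (Fin n) := ⟨⟨0, by omega⟩⟩
  have hsplit : {IJ : Finset (Fin n) × Finset (Fin n) |
        IJ.1.card = p ∧ IJ.2.card = q ∧
        ∀ m : Fin n → ZMod 2, ∑ i, m i = 0 → ∑ i ∈ IJ.1, m i = ∑ j ∈ IJ.2, m j} =
      {IJ | IJ.1.card = p ∧ IJ.2 = IJ.1 ∧ p = q} ∪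
        {IJ | IJ.1.card = p ∧ IJ.2 = IJ.1ᶜ ∧ p + q = n} := by
    ext ⟨I, J⟩
    simp only [Set.mem_ofPred_eq, Set.mem_union, forall_sum_eq_zero_imp_sum_eq_sum_iff]
    have hcard := card_add_card_compl I
    rw [Fintype.card_fin] at hcard
    constructor
    · rintro ⟨hI, hJ, rfl | rfl⟩
      · exact .inl ⟨hI, rfl, by omega⟩
      · exact .inr ⟨hI, rfl, by omega⟩
    · rintro (⟨hI, rfl, rfl⟩ | ⟨hI, rfl, hpq⟩)
      · exact ⟨hI, hI, .inl rfl⟩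
      · exact ⟨hI, by omega, .inr rfl⟩
  have hdisj : Disjoint
      {IJ : Finset (Fin n) × Finset (Fin n) | IJ.1.card = p ∧ IJ.2 = IJ.1 ∧ p = q}
      {IJ | IJ.1.card = p ∧ IJ.2 = IJ.1ᶜ ∧ p + q = n} :=
    Set.disjoint_left.mpr fun _ ⟨_, hJ, _⟩ ⟨_, hJ', _⟩ => ne_compl_self (hJ.symm.trans hJ')
  rw [hsplit, Set.ncard_union_eq hdisj, ncard_setOf_card_eq_and_snd_eq p (fun I => I),
    ncard_setOf_card_eq_and_snd_eq p compl, Fintype.card_fin]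
  split_ifs <;> omega

/-- For `n ≥ 2` and `0 ≤ p, q ≤ n`, the number of pairs `(I, J)` of subsets of
`{1,…,n}` with `|I| = p`, `|J| = q` such that every `m ∈ (ℤ/2ℤ)ⁿ` with `∑ mᵢ = 0` satisfies
`∑_{i∈I} mᵢ = ∑_{j∈J} mⱼ` equals `2·C(n,p)` if `p = q` and `p + q = n`; `C(n,p)` if exactly one
of `p = q`, `p + q = n` holds; and `0` otherwise. -/
theorem stmt_2 (n p q : ℕ) (hn : 2 ≤ n) (hp : p ≤ n) (hq : q ≤ n) :
    {IJ : Finset (Fin n) × Finset (Fin n) |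
        IJ.1.card = p ∧ IJ.2.card = q ∧
        ∀ m : Fin n → ZMod 2, ∑ i, m i = 0 →
          ∑ i ∈ IJ.1, m i = ∑ j ∈ IJ.2, m j}.ncard =
      if p = q ∧ p + q = n then 2 * n.choose p
      else if p = q ∨ p + q = n then n.choose p
      else 0 :=
  stmt_2_general n p q hn
end

section
/- Let d ≥ 3, n ≥ 2 and let I, J be subsets of {1,…,n}. Then the following are equivalent: (a) for every m = (m₁,…,mₙ) ∈ (ℤ/dℤ)ⁿ with m₁ + ⋯ + mₙ = 0 one has Σ_{i∈I} m_i = Σ_{j∈J} m_j in ℤ/dℤ; (b) I = J, or (I, J) = ({1,…,n}, ∅), or (I, J) = (∅, {1,…,n}). -/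
/-!
Testing the condition on `m = eᵢ - eⱼ` gives `[i ∈ I] + [j ∈ J] = [i ∈ J] + [j ∈ I]` for all
`i ≠ j`. Since `2 ≠ 0`, once some `k` lies in `I` but not in `J`, this identity for the pair
`(k, j)` forces every other `j` to lie in `I` but not in `J` as well.
-/

open Finset

section

variable {α R : Type*} [Fintype α] [DecidableEq α] [Ring R]

lemma eq_univ_and_eq_empty_of_mem_sdiff (h2 : (2 : R) ≠ 0) {I J : Finset α}
    (hswap : ∀ i j, i ≠ j →
      ((if i ∈ I then 1 else 0) + (if j ∈ J then 1 else 0) : R) =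
        (if i ∈ J then 1 else 0) + (if j ∈ I then 1 else 0))
    {k : α} (hk : k ∈ I \ J) : I = univ ∧ J = ∅ := by
  rw [mem_sdiff] at hk
  have h1 : (1 : R) ≠ 0 := fun h ↦ h2 (by rw [← one_add_one_eq_two, h, add_zero])
  have hmem : ∀ j, j ∈ I ∧ j ∉ J := by
    intro j
    rcases eq_or_ne j k with rfl | hjk
    · exact hk
    have hkj := hswap k j hjk.symm
    simp only [hk.1, hk.2, if_true, if_false] at hkj
    split_ifs at hkj with hjJ hjI hjI
    · simp [h1] at hkj
    · simp [h2, one_add_one_eq_two] at hkj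
    · exact ⟨hjI, hjJ⟩
    · simp [h1] at hkj
  exact ⟨eq_univ_iff_forall.2 fun j ↦ (hmem j).1, eq_empty_iff_forall_notMem.2 fun j ↦ (hmem j).2⟩

theorem forall_sum_eq_sum_of_sum_eq_zero_iff (h2 : (2 : R) ≠ 0) (I J : Finset α) :
    (∀ m : α → R, ∑ i, m i = 0 → ∑ i ∈ I, m i = ∑ j ∈ J, m j) ↔
      (I = J ∨ (I = univ ∧ J = ∅) ∨ (I = ∅ ∧ J = univ)) := by
  constructor
  · intro h
    have hswap : ∀ i j, i ≠ j →
        ((if i ∈ I then 1 else 0) + (if j ∈ J then 1 else 0) : R) =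
          (if i ∈ J then 1 else 0) + (if j ∈ I then 1 else 0) := by
      intro i j _
      have hij := h (Pi.single i 1 - Pi.single j 1) (by simp [sum_sub_distrib])
      simpa only [Pi.sub_apply, sum_sub_distrib, sum_pi_single', sub_eq_sub_iff_add_eq_add]
        using hij
    by_cases hIJ : I = J
    · exact Or.inl hIJ
    rcases not_and_or.1 (mt (fun h ↦ subset_antisymm h.1 h.2) hIJ) with hI | hJ
    · obtain ⟨k, hk⟩ := sdiff_nonempty.2 hI
      exact Or.inr (Or.inl (eq_univ_and_eq_empty_of_mem_sdiff h2 hswap hk))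
    · obtain ⟨k, hk⟩ := sdiff_nonempty.2 hJ
      exact Or.inr (Or.inr
        (eq_univ_and_eq_empty_of_mem_sdiff h2 (fun i j hij ↦ (hswap i j hij).symm) hk).symm)
  · rintro (rfl | ⟨rfl, rfl⟩ | ⟨rfl, rfl⟩) <;> intro m hm <;> simp [hm]

end

theorem stmt_3_general (d n : ℕ) (hd : 3 ≤ d) (I J : Finset (Fin n)) :
    (∀ m : Fin n → ZMod d, ∑ i, m i = 0 → ∑ i ∈ I, m i = ∑ j ∈ J, m j) ↔
      (I = J ∨ (I = Finset.univ ∧ J = ∅) ∨ (I = ∅ ∧ J = Finset.univ)) := by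
  have h2 : ((2 : ℕ) : ZMod d) ≠ 0 := by
    rw [Ne, ZMod.natCast_eq_zero_iff]
    exact fun hdvd ↦ absurd (Nat.le_of_dvd two_pos hdvd) (by omega)
  exact forall_sum_eq_sum_of_sum_eq_zero_iff (by exact_mod_cast h2) I J

/-- For `d ≥ 3`, `n ≥ 2` and subsets `I, J ⊆ {1,…,n}`, the condition that every
`m ∈ (ℤ/dℤ)ⁿ` with `∑ mᵢ = 0` satisfies `∑_{i∈I} mᵢ = ∑_{j∈J} mⱼ` is equivalent to
`I = J`, or `(I, J) = ({1,…,n}, ∅)`, or `(I, J) = (∅, {1,…,n})`. -/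
theorem stmt_3 (d n : ℕ) (hd : 3 ≤ d) (hn : 2 ≤ n) (I J : Finset (Fin n)) :
    (∀ m : Fin n → ZMod d, ∑ i, m i = 0 → ∑ i ∈ I, m i = ∑ j ∈ J, m j) ↔
      (I = J ∨ (I = Finset.univ ∧ J = ∅) ∨ (I = ∅ ∧ J = Finset.univ)) :=
  stmt_3_general d n hd I J
end

section
/- Let d ≥ 3, n ≥ 2 and 0 ≤ p, q ≤ n. The number of pairs (I, J) of subsets of {1,…,n} with |I| = p, |J| = q such that for every m ∈ (ℤ/dℤ)ⁿ with m₁ + ⋯ + mₙ = 0 one has Σ_{i∈I} m_i = Σ_{j∈J} m_j in ℤ/dℤ, equals: C(n,p) if p = q; 1 if (p,q) = (0,n) or (p,q) = (n,0); and 0 otherwise. (Here C(n,p) denotes the binomial coefficient.) -/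
/-!
Write `t(i) ∈ {-1, 0, 1}` for `[i ∈ I] - [i ∈ J]`. Testing the condition on `m = eᵢ - eⱼ`
gives `t(i) ≡ t(j) mod d`, and since `|t(i) - t(j)| ≤ 2 < d` this forces `t` to be constant.
The constant `0, 1, -1` means `I = J`, `(I, J) = (univ, ∅)`, `(I, J) = (∅, univ)` respectively,
and conversely these pairs are invariant; it remains to count them by cardinality.
-/

open Finset

variable {ι : Type*}

section MembershipDiff

variable [DecidableEq ι]

def membershipDiff (I J : Finset ι) (i : ι) : ℤ :=
  (if i ∈ I then 1 else 0) - (if i ∈ J then 1 else 0)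

variable {I J : Finset ι}

lemma membershipDiff_eq_zero_iff {i : ι} : membershipDiff I J i = 0 ↔ (i ∈ I ↔ i ∈ J) := by
  unfold membershipDiff
  split_ifs <;> simp_all

lemma membershipDiff_eq_one_iff {i : ι} : membershipDiff I J i = 1 ↔ i ∈ I ∧ i ∉ J := by
  unfold membershipDiff
  split_ifs <;> simp_all

lemma membershipDiff_eq_neg_one_iff {i : ι} :
    membershipDiff I J i = -1 ↔ i ∉ I ∧ i ∈ J := by
  unfold membershipDiff
  split_ifs <;> simp_all

lemma membershipDiff_trichotomy (i : ι) :
    membershipDiff I J i = 0 ∨ membershipDiff I J i = 1 ∨ membershipDiff I J i = -1 := by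
  unfold membershipDiff
  split_ifs <;> simp

lemma sum_single_sub_single {R : Type*} [Ring R] (s : Finset ι) (i j : ι) :
    ∑ k ∈ s, (Pi.single i 1 - Pi.single j 1 : ι → R) k =
      (if i ∈ s then 1 else 0) - (if j ∈ s then 1 else 0) := by
  simp [sum_sub_distrib, sum_pi_single']

lemma intCast_membershipDiff_eq [Fintype ι] {R : Type*} [Ring R]
    (h : ∀ m : ι → R, ∑ i, m i = 0 → ∑ i ∈ I, m i = ∑ j ∈ J, m j) (i j : ι) :
    (membershipDiff I J i : R) = membershipDiff I J j := by
  have hij := h (Pi.single i 1 - Pi.single j 1) (by simp)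
  simp only [sum_single_sub_single] at hij
  unfold membershipDiff
  push_cast
  rwa [sub_eq_sub_iff_sub_eq_sub]

lemma membershipDiff_eq_of_intCast_zmod_eq {d : ℕ} (hd : 3 ≤ d) {i j : ι}
    (h : (membershipDiff I J i : ZMod d) = membershipDiff I J j) :
    membershipDiff I J i = membershipDiff I J j := by
  rw [ZMod.intCast_eq_intCast_iff_dvd_sub] at h
  have hsmall : |membershipDiff I J j - membershipDiff I J i| < d := by
    unfold membershipDiff
    rw [abs_lt]
    constructor <;> split_ifs <;> omega
  linarith [Int.eq_zero_of_abs_lt_dvd h hsmall]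

lemma eq_or_eq_empty_univ_of_membershipDiff_const [Fintype ι]
    (h : ∀ i j, membershipDiff I J i = membershipDiff I J j) :
    I = J ∨ (I = ∅ ∧ J = univ) ∨ (I = univ ∧ J = ∅) := by
  cases isEmpty_or_nonempty ι with
  | inl _ => exact Or.inl (Subsingleton.elim I J)
  | inr hne =>
    obtain ⟨i₀⟩ := hne
    rcases membershipDiff_trichotomy (I := I) (J := J) i₀ with h₀ | h₀ | h₀
    · exact Or.inl <| ext fun i => membershipDiff_eq_zero_iff.1 ((h i i₀).trans h₀)
    · have hi := fun i => membershipDiff_eq_one_iff.1 ((h i i₀).trans h₀)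
      exact Or.inr <| Or.inr
        ⟨eq_univ_iff_forall.2 fun i => (hi i).1, eq_empty_iff_forall_notMem.2 fun i => (hi i).2⟩
    · have hi := fun i => membershipDiff_eq_neg_one_iff.1 ((h i i₀).trans h₀)
      exact Or.inr <| Or.inl
        ⟨eq_empty_iff_forall_notMem.2 fun i => (hi i).1, eq_univ_iff_forall.2 fun i => (hi i).2⟩

end MembershipDiff

theorem sum_eq_sum_of_sum_eq_zero_iff [Fintype ι] [DecidableEq ι] {d : ℕ} (hd : 3 ≤ d)
    (I J : Finset ι) :
    (∀ m : ι → ZMod d, ∑ i, m i = 0 → ∑ i ∈ I, m i = ∑ j ∈ J, m j) ↔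
      I = J ∨ (I = ∅ ∧ J = univ) ∨ (I = univ ∧ J = ∅) := by
  constructor
  · intro h
    exact eq_or_eq_empty_univ_of_membershipDiff_const fun i j =>
      membershipDiff_eq_of_intCast_zmod_eq hd (intCast_membershipDiff_eq h i j)
  · rintro (rfl | ⟨rfl, rfl⟩ | ⟨rfl, rfl⟩) m hm <;> simp [hm]

section Counting

variable [Fintype ι]

lemma ncard_pairs_eq_or_empty_univ_of_card_eq (p : ℕ) :
    {IJ : Finset ι × Finset ι | IJ.1.card = p ∧ IJ.2.card = p ∧
      (IJ.1 = IJ.2 ∨ (IJ.1 = ∅ ∧ IJ.2 = univ) ∨ (IJ.1 = univ ∧ IJ.2 = ∅))}.ncard =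
      (Fintype.card ι).choose p := by
  calc _ = ((fun I => (I, I)) ''
        ((powersetCard p univ : Finset (Finset ι)) : Set (Finset ι))).ncard := by
        congr 1
        ext ⟨I, J⟩
        simp only [Set.mem_ofPred_eq, Set.mem_image, mem_coe, mem_powersetCard, Prod.mk.injEq]
        constructor
        · rintro ⟨hI, hJ, rfl | ⟨rfl, rfl⟩ | ⟨rfl, rfl⟩⟩
          · exact ⟨I, ⟨subset_univ I, hI⟩, rfl, rfl⟩
          -- a pair `(∅, univ)` of equal cardinalities only occurs for empty `ι`
          all_goals
            have : (univ : Finset ι) = ∅ := card_eq_zero.1 (by simp_all)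
            exact ⟨∅, by simp_all⟩
        · rintro ⟨K, ⟨-, hK⟩, rfl, rfl⟩
          exact ⟨hK, hK, Or.inl rfl⟩
    _ = (Fintype.card ι).choose p := by
      rw [Set.ncard_image_of_injective _ fun I J h => congrArg Prod.fst h, Set.ncard_coe_finset,
        card_powersetCard, card_univ]

lemma ncard_pairs_eq_or_empty_univ_of_card_ne {p q : ℕ} (hpq : p ≠ q) :
    {IJ : Finset ι × Finset ι | IJ.1.card = p ∧ IJ.2.card = q ∧
      (IJ.1 = IJ.2 ∨ (IJ.1 = ∅ ∧ IJ.2 = univ) ∨ (IJ.1 = univ ∧ IJ.2 = ∅))}.ncard =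
      if (p = 0 ∧ q = Fintype.card ι) ∨ (p = Fintype.card ι ∧ q = 0) then 1 else 0 := by
  split_ifs with hc
  · rcases hc with ⟨rfl, rfl⟩ | ⟨rfl, rfl⟩
    · rw [Set.ncard_eq_one]
      refine ⟨(∅, univ), ?_⟩
      ext ⟨I, J⟩
      simp only [card_eq_zero, Set.mem_ofPred_eq, Set.mem_singleton_iff, Prod.mk.injEq,
        and_congr_right_iff]
      aesop
    · rw [Set.ncard_eq_one]
      refine ⟨(univ, ∅), ?_⟩
      ext ⟨I, J⟩
      simp only [card_eq_zero, Set.mem_ofPred_eq, Set.mem_singleton_iff, Prod.mk.injEq]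
      aesop
  · rw [Set.ncard_eq_zero]
    ext ⟨I, J⟩
    simp only [Set.mem_ofPred_eq, Set.mem_empty_iff_false, iff_false, not_and, not_or]
    aesop

end Counting

theorem stmt_4_general (d n p q : ℕ) (hd : 3 ≤ d) :
    {IJ : Finset (Fin n) × Finset (Fin n) |
        IJ.1.card = p ∧ IJ.2.card = q ∧
        ∀ m : Fin n → ZMod d, ∑ i, m i = 0 →
          ∑ i ∈ IJ.1, m i = ∑ j ∈ IJ.2, m j}.ncard =
      if p = q then n.choose p
      else if (p = 0 ∧ q = n) ∨ (p = n ∧ q = 0) then 1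
      else 0 := by
  simp_rw [sum_eq_sum_of_sum_eq_zero_iff hd]
  by_cases hpq : p = q
  · subst hpq
    rw [if_pos rfl, ncard_pairs_eq_or_empty_univ_of_card_eq, Fintype.card_fin]
  · rw [if_neg hpq, ncard_pairs_eq_or_empty_univ_of_card_ne hpq, Fintype.card_fin]

/-- For `d ≥ 3`, `n ≥ 2` and `0 ≤ p, q ≤ n`, the number of pairs `(I, J)` of
subsets of `{1,…,n}` with `|I| = p`, `|J| = q` such that every `m ∈ (ℤ/dℤ)ⁿ` with `∑ mᵢ = 0`
satisfies `∑_{i∈I} mᵢ = ∑_{j∈J} mⱼ` equals `C(n,p)` if `p = q`; `1` if `(p,q) ∈ {(0,n),(n,0)}`;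
and `0` otherwise. -/
theorem stmt_4 (d n p q : ℕ) (hd : 3 ≤ d) (hn : 2 ≤ n) (hp : p ≤ n) (hq : q ≤ n) :
    {IJ : Finset (Fin n) × Finset (Fin n) |
        IJ.1.card = p ∧ IJ.2.card = q ∧
        ∀ m : Fin n → ZMod d, ∑ i, m i = 0 →
          ∑ i ∈ IJ.1, m i = ∑ j ∈ IJ.2, m j}.ncard =
      if p = q then n.choose p
      else if (p = 0 ∧ q = n) ∨ (p = n ∧ q = 0) then 1
      else 0 :=
  stmt_4_general d n p q hd
end

section
/- Let n ≥ 1 and c : {1,…,n} → {A, B, C}. Consider the following ℤ/6ℤ-sets: S_A is a one-element set with trivial action; S_B = {0, 1, 2} on which k ∈ ℤ/6ℤ acts as the k-th power of the transposition (1 2) (fixing 0); S_C = {0, 1, 2, 3} on which k acts as the k-th power of the 3-cycle (1 2 3) (fixing 0). Let the group G = {m ∈ (ℤ/6ℤ)ⁿ : m₁ + ⋯ + mₙ = 0} act on the product X_c = Π_{i=1}^{n} S_{c(i)} coordinatewise, m_i acting on the i-th factor. If there exists i with c(i) = A, or there exist i, j with c(i) = B and c(j) = C, then the number of G-orbits on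 X_c equals 2^{w}, where w = #{i : c(i) ∈ {B, C}}. -/
/-!
The relation in the statement is the orbit relation of `G`. Under the hypothesis `G` has the same
orbits as all of `(ℤ/6ℤ)ⁿ`, because every `m` can be moved into `G` by an element acting trivially:
all of `ℤ/6ℤ` acts trivially on `S_A`, and on `S_B`, `S_C` the multiples of `2`, resp. `3`, do,
with `4k + 3k = k`. The orbits of `(ℤ/6ℤ)ⁿ` on the product are products of orbits, and `ℤ/6ℤ` has
one orbit on `S_A` and two orbits, `{0}` and the rest, on `S_B` and on `S_C`.
-/

/-- Labels for the three kinds of ℤ/6ℤ-sets. -/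
inductive Label : Type
  | A | B | C
  deriving DecidableEq

/-- The underlying set of each ℤ/6ℤ-set: `S_A` is a point, `S_B = {0,1,2}`,
`S_C = {0,1,2,3}`. -/
@[reducible] def fiber : Label → Type
  | .A => PUnit
  | .B => Fin 3
  | .C => Fin 4

/-- The permutation whose `k`-th power gives the action of `k ∈ ℤ/6ℤ`: trivial on `S_A`,
the transposition `(1 2)` on `S_B`, and the 3-cycle `(1 2 3)` (i.e. `1 ↦ 2 ↦ 3 ↦ 1`,
fixing `0`) on `S_C`. -/
def labelPerm : (l : Label) → Equiv.Perm (fiber l)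
  | .A => 1
  | .B => Equiv.swap 1 2
  | .C => Equiv.swap 1 2 * Equiv.swap 2 3

open AddAction

theorem Setoid.card_quotient_of_eq_ker {α β : Type*} {s : Setoid α} (f : α → β)
    (hf : Function.Surjective f) (hs : ∀ x y, s x y ↔ f x = f y) :
    Nat.card (Quotient s) = Nat.card β := by
  obtain rfl : s = Setoid.ker f := Setoid.ext hs
  exact Nat.card_congr (Setoid.quotientKerEquivOfSurjective f hf)

section Orbits

variable {M X : Type*} [AddGroup M] [AddAction M X]

theorem AddAction.orbitRel_addSubgroup_eq (H : AddSubgroup M)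
    (hH : ∀ g : M, ∃ h ∈ H, ∀ x : X, h +ᵥ x = g +ᵥ x) :
    orbitRel H X = orbitRel M X := by
  ext x y
  simp only [orbitRel_apply, mem_orbit_iff]
  constructor
  · rintro ⟨h, rfl⟩
    exact ⟨h, rfl⟩
  · rintro ⟨g, rfl⟩
    obtain ⟨h, hH, hg⟩ := hH g
    exact ⟨⟨h, hH⟩, hg y⟩

theorem AddAction.eqvGen_setoid_vadd_eq (H : AddSubgroup M) :
    Relation.EqvGen.setoid (fun x y : X => ∃ g ∈ H, g +ᵥ x = y) = orbitRel H X := by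
  refine le_antisymm (Setoid.eqvGen_le ?_) fun x y hxy => ?_
  · rintro x - ⟨g, hg, rfl⟩
    exact Setoid.symm' _ ⟨⟨g, hg⟩, rfl⟩
  · obtain ⟨⟨g, hg⟩, rfl⟩ := hxy
    exact Setoid.symm' _ (Relation.EqvGen.rel _ _ ⟨g, hg, rfl⟩)

end Orbits

theorem AddAction.orbitRel_pi {ι : Type*} {M X : ι → Type*} [∀ i, AddGroup (M i)]
    [∀ i, AddAction (M i) (X i)] (x y : ∀ i, X i) :
    orbitRel (∀ i, M i) (∀ i, X i) x y ↔ ∀ i, orbitRel (M i) (X i) (x i) (y i) := by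
  simp only [orbitRel_apply, mem_orbit_iff, funext_iff, Pi.vadd_apply']
  exact (Classical.skolem (p := fun i m => m +ᵥ y i = x i)).symm

theorem AddAction.card_orbitRel_quotient_pi {ι : Type*} [Fintype ι] {M X : ι → Type*}
    [∀ i, AddGroup (M i)] [∀ i, AddAction (M i) (X i)] :
    Nat.card (orbitRel.Quotient (∀ i, M i) (∀ i, X i)) =
      ∏ i, Nat.card (orbitRel.Quotient (M i) (X i)) := by
  rw [← Nat.card_pi]
  exact Nat.card_congr ((Quotient.congrRight (orbitRel_pi · ·)).trans
    (Setoid.piQuotientEquiv _).symm)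

def sumZeroAddSubgroup (ι M : Type*) [Fintype ι] [AddCommGroup M] : AddSubgroup (ι → M) :=
  (∑ i, Pi.evalAddMonoidHom (fun _ : ι => M) i).ker

theorem mem_sumZeroAddSubgroup {ι M : Type*} [Fintype ι] [AddCommGroup M] {m : ι → M} :
    m ∈ sumZeroAddSubgroup ι M ↔ ∑ i, m i = 0 := by
  simp [sumZeroAddSubgroup]

instance (l : Label) : AddAction (ZMod 6) (fiber l) where
  vadd k v := (labelPerm l ^ k.val) v
  zero_vadd v := show (labelPerm l ^ (0 : ZMod 6).val) v = v by simp
  add_vadd a b v := by cases l <;> revert a b v <;> decide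

theorem card_orbitRel_quotient_fiber (l : Label) :
    Nat.card (orbitRel.Quotient (ZMod 6) (fiber l)) = if l = .B ∨ l = .C then 2 else 1 := by
  cases l
  · simp
  · rw [orbitRel.Quotient, Setoid.card_quotient_of_eq_ker (fun v : Fin 3 => decide (v = 0))]
    · simp
    · exact fun b => ⟨if b then 0 else 1, by cases b <;> decide⟩
    · simp only [orbitRel_apply, mem_orbit_iff]; decide
  · rw [orbitRel.Quotient, Setoid.card_quotient_of_eq_ker (fun v : Fin 4 => decide (v = 0))]
    · simp
    · exact fun b => ⟨if b then 0 else 1, by cases b <;> decide⟩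
    · simp only [orbitRel_apply, mem_orbit_iff]; decide

theorem Pi.single_vadd_eq_self {ι : Type*} [DecidableEq ι] {M X : ι → Type*}
    [∀ i, AddMonoid (M i)] [∀ i, AddAction (M i) (X i)] {i : ι} {a : M i}
    (ha : ∀ v : X i, a +ᵥ v = v) (x : ∀ i, X i) : Pi.single i a +ᵥ x = x := by
  ext j
  obtain rfl | hj := eq_or_ne j i
  · simp [ha]
  · simp [Pi.single_eq_of_ne hj]

theorem vadd_eq_self_of_eq_A {l : Label} (hl : l = .A) (k : ZMod 6) (v : fiber l) :
    k +ᵥ v = v := by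
  subst hl; rfl

theorem four_mul_vadd_eq_self {l : Label} (hl : l = .B) (k : ZMod 6) (v : fiber l) :
    (4 * k) +ᵥ v = v := by
  subst hl; revert k v; decide

theorem three_mul_vadd_eq_self {l : Label} (hl : l = .C) (k : ZMod 6) (v : fiber l) :
    (3 * k) +ᵥ v = v := by
  subst hl; revert k v; decide

theorem exists_sum_eq_vadd_eq_self {n : ℕ} {c : Fin n → Label}
    (h : (∃ i, c i = Label.A) ∨ (∃ i j, c i = Label.B ∧ c j = Label.C)) (t : ZMod 6) :
    ∃ d : Fin n → ZMod 6, ∑ i, d i = t ∧ ∀ x : (i : Fin n) → fiber (c i), d +ᵥ x = x := by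
  rcases h with ⟨i, hA⟩ | ⟨i, j, hB, hC⟩
  · exact ⟨Pi.single i t, by simp, Pi.single_vadd_eq_self (vadd_eq_self_of_eq_A hA t)⟩
  · refine ⟨Pi.single i (4 * t) + Pi.single j (3 * t), ?_, fun x => ?_⟩
    · have hsplit : ∀ t : ZMod 6, 4 * t + 3 * t = t := by decide
      simp [Finset.sum_add_distrib, hsplit]
    · rw [add_vadd, Pi.single_vadd_eq_self (i := j) (three_mul_vadd_eq_self hC t),
        Pi.single_vadd_eq_self (i := i) (four_mul_vadd_eq_self hB t)]

theorem orbitRel_sumZeroAddSubgroup_eq {n : ℕ} {c : Fin n → Label}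
    (h : (∃ i, c i = Label.A) ∨ (∃ i j, c i = Label.B ∧ c j = Label.C)) :
    orbitRel (sumZeroAddSubgroup (Fin n) (ZMod 6)) ((i : Fin n) → fiber (c i)) =
      orbitRel (Fin n → ZMod 6) ((i : Fin n) → fiber (c i)) := by
  refine orbitRel_addSubgroup_eq _ fun g => ?_
  obtain ⟨d, hd, hdx⟩ := exists_sum_eq_vadd_eq_self h (∑ i, g i)
  refine ⟨g - d, ?_, fun x => ?_⟩
  · simp [mem_sumZeroAddSubgroup, Finset.sum_sub_distrib, hd]
  · rw [sub_eq_neg_add, add_vadd, eq_comm, eq_neg_vadd_iff, hdx]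

theorem stmt_5_general (n : ℕ) (c : Fin n → Label)
    (h : (∃ i, c i = Label.A) ∨ (∃ i j, c i = Label.B ∧ c j = Label.C)) :
    Nat.card (Quotient (Relation.EqvGen.setoid
      (fun x y : (i : Fin n) → fiber (c i) =>
        ∃ m : Fin n → ZMod 6, ∑ i, m i = 0 ∧
          ∀ i, (labelPerm (c i) ^ (m i).val) (x i) = y i))) =
      2 ^ (Finset.univ.filter fun i => c i = Label.B ∨ c i = Label.C).card := by
  have hG : (fun x y : (i : Fin n) → fiber (c i) => ∃ m : Fin n → ZMod 6, ∑ i, m i = 0 ∧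
      ∀ i, (labelPerm (c i) ^ (m i).val) (x i) = y i) =
      fun x y => ∃ g ∈ sumZeroAddSubgroup (Fin n) (ZMod 6), g +ᵥ x = y := by
    funext x y
    simp only [mem_sumZeroAddSubgroup, funext_iff]
    rfl
  rw [hG, eqvGen_setoid_vadd_eq, orbitRel_sumZeroAddSubgroup_eq h]
  change Nat.card (orbitRel.Quotient _ _) = _
  rw [card_orbitRel_quotient_pi]
  simp only [card_orbitRel_quotient_fiber, Finset.prod_ite, Finset.prod_const_one,
    Finset.prod_const, mul_one]

/-- if some coordinate has type `A`, or there are coordinates of both types `B`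
and `C`, then the number of orbits of `G = {m ∈ (ℤ/6ℤ)ⁿ : ∑ mᵢ = 0}` acting coordinatewise
on `∏ᵢ S_{c(i)}` equals `2^w` where `w = #{i : c i ∈ {B, C}}`. -/
theorem stmt_5 (n : ℕ) (hn : 1 ≤ n) (c : Fin n → Label)
    (h : (∃ i, c i = Label.A) ∨ (∃ i j, c i = Label.B ∧ c j = Label.C)) :
    Nat.card (Quotient (Relation.EqvGen.setoid
      (fun x y : (i : Fin n) → fiber (c i) =>
        ∃ m : Fin n → ZMod 6, ∑ i, m i = 0 ∧
          ∀ i, (labelPerm (c i) ^ (m i).val) (x i) = y i))) =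
      2 ^ (Finset.univ.filter fun i => c i = Label.B ∨ c i = Label.C).card :=
  stmt_5_general n c h
end

section
/- Let n ≥ 1. Let S_C = {0, 1, 2, 3} be the ℤ/6ℤ-set on which k ∈ ℤ/6ℤ acts as the k-th power of the 3-cycle (1 2 3) (fixing 0). Let the group G = {m ∈ (ℤ/6ℤ)ⁿ : m₁ + ⋯ + mₙ = 0} act on the product (S_C)ⁿ coordinatewise, m_i acting on the i-th factor. Then the number of G-orbits equals 2ⁿ + 2. -/
/-!
On `Fin 4` the permutation fixes `0` and rotates `1 → 2 → 3 → 1`, so it acts on `{1, 2, 3}` as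
`+1` on `ZMod 3` via `a ↦ a - 1`. The set of coordinates equal to `0` is an orbit invariant.
A coordinate in it absorbs any value of `mᵢ`, so when it is nonempty it is the only invariant;
when it is empty the sum of the residues mod 3 is one more, since `∑ mᵢ = 0` forces the
total rotation to be `0` mod 3. This gives `(2ⁿ - 1) + 3` orbits.
-/

open Finset Function

theorem Setoid.nat_card_quotient_eqvGen_of_surjective {α β : Type*} {r : α → α → Prop}
    (f : α → β) (hf : Surjective f) (h : ∀ x y, r x y ↔ f x = f y) :
    Nat.card (Quotient (Relation.EqvGen.setoid r)) = Nat.card β := by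
  have hr : r = (Setoid.ker f).r := by
    funext x y
    exact propext (h x y)
  subst hr
  rw [Setoid.eqvGen_of_setoid]
  exact Nat.card_congr (Setoid.quotientKerEquivOfSurjective f hf)

theorem exists_sum_eq_zero_map_eq {A B F ι : Type*} [AddCommGroup A] [AddCommGroup B]
    [FunLike F A B] [AddMonoidHomClass F A B] [Fintype ι] [DecidableEq ι] (π : F)
    (hπ : Surjective π) (c : ι → B) (i₀ : ι) :
    ∃ m : ι → A, ∑ i, m i = 0 ∧
      ∀ i, π (m i) = c i - if i = i₀ then ∑ j, c j else 0 := by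
  choose m' hm' using fun i => hπ (c i)
  refine ⟨fun i => m' i - if i = i₀ then ∑ j, m' j else 0, ?_, fun i => ?_⟩
  · simp [Finset.sum_sub_distrib]
  · simp [apply_ite π, map_sum, hm']

theorem Finset.card_subtype_nonempty (α : Type*) [Fintype α] :
    Fintype.card {s : Finset α // s.Nonempty} = 2 ^ Fintype.card α - 1 := by
  classical
  rw [Fintype.card_congr (Equiv.subtypeEquivRight fun s => Finset.nonempty_iff_ne_empty),
    Fintype.card_subtype_compl, Fintype.card_finset, Fintype.card_subtype_eq]

namespace ThreeCycle

def rot3 : Equiv.Perm (Fin 4) := Equiv.swap 1 2 * Equiv.swap 2 3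

def residue (a : Fin 4) : ZMod 3 := (a : ℕ) - 1

abbrev mod3 : ZMod 6 →+* ZMod 3 := ZMod.castHom (by decide) (ZMod 3)

theorem rot3_pow_three : rot3 ^ 3 = 1 := by decide

theorem rot3_pow_apply_eq_iff (k : ℕ) (a b : Fin 4) :
    (rot3 ^ k) a = b ↔ a = 0 ∧ b = 0 ∨ a ≠ 0 ∧ b ≠ 0 ∧ residue b = residue a + k := by
  have small : ∀ j : Fin 3, ∀ a b : Fin 4, (rot3 ^ (j : ℕ)) a = b ↔
      a = 0 ∧ b = 0 ∨ a ≠ 0 ∧ b ≠ 0 ∧ residue b = residue a + ((j : ℕ) : ZMod 3) := by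
    decide
  rw [pow_eq_pow_mod k rot3_pow_three, ← ZMod.natCast_mod k 3]
  exact small ⟨k % 3, Nat.mod_lt k (by norm_num)⟩ a b

theorem exists_ne_zero_residue_eq (t : ZMod 3) : ∃ a : Fin 4, a ≠ 0 ∧ residue a = t := by
  revert t
  decide

variable {n : ℕ}

def zeroSet (x : Fin n → Fin 4) : Finset (Fin n) := {i | x i = 0}

def OrbitRel (x y : Fin n → Fin 4) : Prop :=
  ∃ m : Fin n → ZMod 6, ∑ i, m i = 0 ∧ ∀ i, (rot3 ^ (m i).val) (x i) = y i

def orbitInvariant (x : Fin n → Fin 4) : {s : Finset (Fin n) // s.Nonempty} ⊕ ZMod 3 :=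
  if h : (zeroSet x).Nonempty then .inl ⟨zeroSet x, h⟩ else .inr (∑ i, residue (x i))

theorem orbitInvariant_eq_iff (x y : Fin n → Fin 4) :
    orbitInvariant x = orbitInvariant y ↔
      zeroSet x = zeroSet y ∧
        (zeroSet x = ∅ → ∑ i, residue (x i) = ∑ i, residue (y i)) := by
  unfold orbitInvariant
  split_ifs with hx hy hy
  · simp [Subtype.ext_iff, hx.ne_empty]
  · simp only [false_iff, not_and]
    rintro h -
    exact hy (h ▸ hx)
  · simp only [false_iff, not_and]
    rintro h -
    exact hx (h ▸ hy)
  · rw [Finset.not_nonempty_iff_eq_empty] at hx hy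
    simp [hx, hy]

theorem orbitInvariant_surjective (hn : 1 ≤ n) : Surjective (orbitInvariant (n := n)) := by
  rintro (⟨s, hs⟩ | t)
  · refine ⟨fun i => if i ∈ s then 0 else 1, ?_⟩
    have hzero : zeroSet (fun i => if i ∈ s then (0 : Fin 4) else 1) = s := by
      ext i
      by_cases hi : i ∈ s <;> simp [zeroSet, hi]
    simp [orbitInvariant, hzero, hs]
  · obtain ⟨a, ha, rfl⟩ := exists_ne_zero_residue_eq t
    let i₀ : Fin n := ⟨0, hn⟩
    refine ⟨fun i => if i = i₀ then a else 1, ?_⟩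
    have hzero : zeroSet (fun i => if i = i₀ then a else 1) = ∅ := by
      ext i
      by_cases hi : i = i₀ <;> simp [zeroSet, hi, ha]
    have hres : ∀ i, residue (if i = i₀ then a else 1) = if i = i₀ then residue a else 0 := by
      intro i
      split_ifs <;> rfl
    simp [orbitInvariant, hzero, hres]

theorem orbitRel_iff (x y : Fin n → Fin 4) :
    OrbitRel x y ↔ ∃ m : Fin n → ZMod 6, ∑ i, m i = 0 ∧ ∀ i,
      x i = 0 ∧ y i = 0 ∨
        x i ≠ 0 ∧ y i ≠ 0 ∧ residue (y i) = residue (x i) + mod3 (m i) := by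
  simp only [OrbitRel, rot3_pow_apply_eq_iff, ZMod.natCast_val, ZMod.castHom_apply]

theorem OrbitRel.zeroSet_eq {x y : Fin n → Fin 4} (h : OrbitRel x y) :
    zeroSet x = zeroSet y ∧
      (zeroSet x = ∅ → ∑ i, residue (x i) = ∑ i, residue (y i)) := by
  obtain ⟨m, hm, hxy⟩ := (orbitRel_iff x y).1 h
  refine ⟨?_, fun hempty => ?_⟩
  · ext i
    simp only [zeroSet, Finset.mem_filter, Finset.mem_univ, true_and]
    rcases hxy i with h | h <;> tauto
  · have hx : ∀ i, x i ≠ 0 := fun i hi => by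
      simpa [zeroSet, hi] using Finset.eq_empty_iff_forall_notMem.1 hempty i
    calc ∑ i, residue (x i) = ∑ i, residue (x i) + mod3 (∑ i, m i) := by simp [hm]
      _ = ∑ i, residue (y i) := by
        rw [map_sum, ← Finset.sum_add_distrib]
        refine Finset.sum_congr rfl fun i _ => ?_
        rcases hxy i with h | h
        · exact absurd h.1 (hx i)
        · exact h.2.2.symm

theorem orbitRel_of_zeroSet_eq (hn : 1 ≤ n) {x y : Fin n → Fin 4} (hz : zeroSet x = zeroSet y)
    (hs : zeroSet x = ∅ → ∑ i, residue (x i) = ∑ i, residue (y i)) : OrbitRel x y := by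
  set c : Fin n → ZMod 3 := fun i => residue (y i) - residue (x i)
  -- The correction making `∑ mᵢ = 0` is put at `i₀`: harmless where `x` vanishes,
  -- and otherwise zero mod 3.
  obtain ⟨i₀, hi₀⟩ : ∃ i₀, x i₀ = 0 ∨ ∑ i, c i = 0 := by
    by_cases hne : (zeroSet x).Nonempty
    · obtain ⟨i, hi⟩ := hne
      exact ⟨i, .inl (by simpa [zeroSet] using hi)⟩
    · refine ⟨⟨0, hn⟩, .inr ?_⟩
      simp [c, Finset.sum_sub_distrib, hs (Finset.not_nonempty_iff_eq_empty.1 hne)]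
  obtain ⟨m, hm, hmc⟩ := exists_sum_eq_zero_map_eq mod3 (ZMod.castHom_surjective _) c i₀
  refine (orbitRel_iff x y).2 ⟨m, hm, fun i => ?_⟩
  have hxy : x i = 0 ↔ y i = 0 := by simpa [zeroSet] using Finset.ext_iff.1 hz i
  by_cases hxi : x i = 0
  · exact .inl ⟨hxi, hxy.1 hxi⟩
  · have hmi : mod3 (m i) = c i := by
      rw [hmc]
      split_ifs with hi
      · rw [hi₀.resolve_left (hi ▸ hxi), sub_zero]
      · rw [sub_zero]
    refine .inr ⟨hxi, mt hxy.2 hxi, ?_⟩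
    rw [hmi, add_sub_cancel]

theorem orbitRel_iff_orbitInvariant_eq (hn : 1 ≤ n) (x y : Fin n → Fin 4) :
    OrbitRel x y ↔ orbitInvariant x = orbitInvariant y := by
  rw [orbitInvariant_eq_iff]
  exact ⟨OrbitRel.zeroSet_eq, fun h => orbitRel_of_zeroSet_eq hn h.1 h.2⟩

end ThreeCycle

/-- Let `S_C = {0,1,2,3}` with `k ∈ ℤ/6ℤ` acting as the `k`-th power of the
3-cycle `(1 2 3)` (fixing `0`). Then the number of orbits of
`G = {m ∈ (ℤ/6ℤ)ⁿ : ∑ mᵢ = 0}` acting coordinatewise on `(S_C)ⁿ` equals `2ⁿ + 2`. -/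
theorem stmt_6 (n : ℕ) (hn : 1 ≤ n) :
    Nat.card (Quotient (Relation.EqvGen.setoid
      (fun x y : Fin n → Fin 4 =>
        ∃ m : Fin n → ZMod 6, ∑ i, m i = 0 ∧
          ∀ i, ((Equiv.swap 1 2 * Equiv.swap 2 3 : Equiv.Perm (Fin 4)) ^ (m i).val)
            (x i) = y i))) =
      2 ^ n + 2 := by
  have : 1 ≤ 2 ^ n := Nat.one_le_two_pow
  calc _ = Nat.card ({s : Finset (Fin n) // s.Nonempty} ⊕ ZMod 3) :=
        Setoid.nat_card_quotient_eqvGen_of_surjective ThreeCycle.orbitInvariant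
          (ThreeCycle.orbitInvariant_surjective hn) (ThreeCycle.orbitRel_iff_orbitInvariant_eq hn)
    _ = 2 ^ n + 2 := by
      simp only [Nat.card_eq_fintype_card, Fintype.card_sum, Finset.card_subtype_nonempty,
        Fintype.card_fin, ZMod.card]
      omega
end

section
/- Let n ≥ 1. Let S_B = {0, 1, 2} be the ℤ/6ℤ-set on which k ∈ ℤ/6ℤ acts as the k-th power of the transposition (1 2) (fixing 0). Let the group G = {m ∈ (ℤ/6ℤ)ⁿ : m₁ + ⋯ + mₙ = 0} act on the product (S_B)ⁿ coordinatewise, m_i acting on the i-th factor. Then the number of G-orbits equals 2ⁿ + 1. -/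
/-!
A coordinate is `0` exactly when its image under any group element is `0`, so the zero set of a
point is an orbit invariant. Away from the zeros, `1 ↦ 0` and `2 ↦ 1` identify `{1, 2}` with
`ℤ/2` and `m ∈ ℤ/6` acts as translation by `m mod 2`; as the `mᵢ` sum to `0`, the total parity
of the nonzero coordinates is invariant as well, but it only constrains the orbit when no
coordinate is `0`: otherwise a zero coordinate can absorb any correction of `∑ mᵢ`. Conversely
every parity pattern `d ∈ (ℤ/2)ⁿ` with `∑ dᵢ = 0` lifts to `3d ∈ G`. The orbits are thus
classified by a nonempty zero set (`2ⁿ - 1` choices) or an empty one together with a parity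
(`2` choices).
-/

open Function Finset

theorem Nat.card_quotient_eqvGen_eq_of_surjective {α β : Type*} {r : α → α → Prop} (f : α → β)
    (hf : Surjective f) (hr : ∀ x y, f x = f y ↔ r x y) :
    Nat.card (Quotient (Relation.EqvGen.setoid r)) = Nat.card β := by
  obtain rfl : r = fun x y => f x = f y := by ext x y; exact (hr x y).symm
  have hker : Relation.EqvGen.setoid (fun x y => f x = f y) = Setoid.ker f :=
    Setoid.ext fun _ _ => (Setoid.ker f).iseqv.eqvGen_iff
  rw [hker]
  exact Nat.card_congr (Setoid.quotientKerEquivOfSurjective f hf)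

theorem Fintype.card_finset_nonempty (α : Type*) [Fintype α] :
    Fintype.card {A : Finset α // A.Nonempty} = 2 ^ Fintype.card α - 1 := by
  classical
  rw [Fintype.card_congr (Equiv.subtypeEquivRight fun A => Finset.nonempty_iff_ne_empty),
    Fintype.card_subtype_compl, Fintype.card_finset, Fintype.card_subtype_eq]

namespace SwapOrbits

local notation "σ" => Equiv.swap (1 : Fin 3) 2

def modTwo : ZMod 6 →+* ZMod 2 := ZMod.castHom (by norm_num) (ZMod 2)

def threeMul : ZMod 2 →+ ZMod 6 where
  toFun d := 3 * d.val
  map_zero' := rfl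
  map_add' := by decide

def parity : Fin 3 → ZMod 2 := ![0, 0, 1]

lemma swap_pow_val_apply_eq_zero_iff (m : ZMod 6) (a : Fin 3) : (σ ^ m.val) a = 0 ↔ a = 0 := by
  revert m a; decide

lemma parity_swap_pow_val_apply (m : ZMod 6) {a : Fin 3} (ha : a ≠ 0) :
    parity ((σ ^ m.val) a) = parity a + modTwo m := by
  revert m a; decide

lemma swap_pow_threeMul_parity_sub (a b : Fin 3) (h : a = 0 ↔ b = 0) :
    (σ ^ (threeMul (parity b - parity a)).val) a = b := by
  revert a b; decide

lemma parity_succ (c : ZMod 2) : parity c.succ = c := by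
  revert c; decide

variable {n : ℕ}

def Rel (n : ℕ) (x y : Fin n → Fin 3) : Prop :=
  ∃ m : Fin n → ZMod 6, ∑ i, m i = 0 ∧ ∀ i, (σ ^ (m i).val) (x i) = y i

def zeroSet (x : Fin n → Fin 3) : Finset (Fin n) := {i | x i = 0}

def totalParity (x : Fin n → Fin 3) : ZMod 2 := ∑ i, parity (x i)

lemma zeroSet_eq_iff {x y : Fin n → Fin 3} :
    zeroSet x = zeroSet y ↔ ∀ i, x i = 0 ↔ y i = 0 := by
  simp [zeroSet, Finset.ext_iff]

lemma ne_zero_of_not_nonempty_zeroSet {x : Fin n → Fin 3} (hx : ¬(zeroSet x).Nonempty)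
    (i : Fin n) : x i ≠ 0 := fun h => hx ⟨i, by simpa [zeroSet] using h⟩

lemma Rel.zeroSet_eq {x y : Fin n → Fin 3} (h : Rel n x y) : zeroSet x = zeroSet y := by
  obtain ⟨m, -, hm⟩ := h
  exact zeroSet_eq_iff.2 fun i => by rw [← hm i, swap_pow_val_apply_eq_zero_iff]

lemma Rel.totalParity_eq {x y : Fin n → Fin 3} (h : Rel n x y) (hx : ¬(zeroSet x).Nonempty) :
    totalParity x = totalParity y := by
  obtain ⟨m, hsum, hm⟩ := h
  calc totalParity x = totalParity x + modTwo (∑ i, m i) := by rw [hsum, map_zero, add_zero]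
    _ = ∑ i, parity ((σ ^ (m i).val) (x i)) := by
      rw [map_sum, totalParity, ← sum_add_distrib]
      exact sum_congr rfl fun i _ =>
        (parity_swap_pow_val_apply _ (ne_zero_of_not_nonempty_zeroSet hx i)).symm
    _ = totalParity y := by simp only [hm, totalParity]

lemma rel_of_zeroSet_eq_of_mem {x y : Fin n → Fin 3} (hxy : zeroSet x = zeroSet y) {i₀ : Fin n}
    (hi₀ : i₀ ∈ zeroSet x) : Rel n x y := by
  set m : Fin n → ZMod 6 := fun i => threeMul (parity (y i) - parity (x i))
  refine ⟨m - Pi.single i₀ (∑ i, m i), by simp [sum_sub_distrib], fun i => ?_⟩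
  have hiff := zeroSet_eq_iff.1 hxy
  by_cases hi : i = i₀
  · subst hi
    have hx : x i = 0 := by simpa [zeroSet] using hi₀
    rw [hx, (swap_pow_val_apply_eq_zero_iff _ _).2 rfl, eq_comm, ← hiff, hx]
  · rw [Pi.sub_apply, Pi.single_eq_of_ne hi, sub_zero]
    exact swap_pow_threeMul_parity_sub _ _ (hiff i)

lemma rel_of_totalParity_eq {x y : Fin n → Fin 3} (hxy : zeroSet x = zeroSet y)
    (hpar : totalParity x = totalParity y) : Rel n x y := by
  refine ⟨fun i => threeMul (parity (y i) - parity (x i)), ?_,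
    fun i => swap_pow_threeMul_parity_sub _ _ (zeroSet_eq_iff.1 hxy i)⟩
  rw [← map_sum, sum_sub_distrib]
  simp only [totalParity] at hpar
  rw [hpar, sub_self, map_zero]

def orbitInvariant (x : Fin n → Fin 3) : {A : Finset (Fin n) // A.Nonempty} ⊕ ZMod 2 :=
  if h : (zeroSet x).Nonempty then .inl ⟨zeroSet x, h⟩ else .inr (totalParity x)

lemma orbitInvariant_eq_iff (x y : Fin n → Fin 3) :
    orbitInvariant x = orbitInvariant y ↔ Rel n x y := by
  constructor
  · intro h
    unfold orbitInvariant at h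
    by_cases hx : (zeroSet x).Nonempty <;> by_cases hy : (zeroSet y).Nonempty <;>
      simp only [hx, hy, dite_true, dite_false, reduceCtorEq, Sum.inl.injEq, Sum.inr.injEq,
        Subtype.mk.injEq] at h
    · exact rel_of_zeroSet_eq_of_mem h hx.choose_spec
    · rw [not_nonempty_iff_eq_empty] at hx hy
      exact rel_of_totalParity_eq (hx.trans hy.symm) h
  · intro h
    have hz := h.zeroSet_eq
    by_cases hx : (zeroSet x).Nonempty
    · simp [orbitInvariant, hx, ← hz]
    · simp [orbitInvariant, hx, ← hz, h.totalParity_eq hx]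

lemma orbitInvariant_surjective (hn : 1 ≤ n) : Surjective (orbitInvariant (n := n)) := by
  rintro (⟨A, hA⟩ | c)
  · have hz : zeroSet (fun i => if i ∈ A then (0 : Fin 3) else 1) = A := by
      ext i; by_cases hi : i ∈ A <;> simp [zeroSet, hi]
    exact ⟨fun i => if i ∈ A then 0 else 1, by simp [orbitInvariant, hz, hA]⟩
  · let i₀ : Fin n := ⟨0, hn⟩
    let x : Fin n → Fin 3 := fun i => Fin.succ ((Pi.single i₀ c : Fin n → ZMod 2) i)
    have hz : ¬(zeroSet x).Nonempty := by
      simp only [zeroSet, x, filter_nonempty_iff, mem_univ, true_and, not_exists]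
      exact fun i => Fin.succ_ne_zero (n := 2) _
    refine ⟨x, ?_⟩
    simp [orbitInvariant, hz, totalParity, x, parity_succ]

theorem card_quotient_rel (hn : 1 ≤ n) :
    Nat.card (Quotient (Relation.EqvGen.setoid (Rel n))) = 2 ^ n + 1 := by
  rw [Nat.card_quotient_eqvGen_eq_of_surjective _ (orbitInvariant_surjective hn)
    orbitInvariant_eq_iff, Nat.card_eq_fintype_card, Fintype.card_sum,
    Fintype.card_finset_nonempty, Fintype.card_fin, ZMod.card]
  have : 1 ≤ 2 ^ n := Nat.one_le_two_pow
  omega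

end SwapOrbits

/-- Let `S_B = {0,1,2}` with `k ∈ ℤ/6ℤ` acting as the `k`-th power of the
transposition `(1 2)` (fixing `0`). Then the number of orbits of
`G = {m ∈ (ℤ/6ℤ)ⁿ : ∑ mᵢ = 0}` acting coordinatewise on `(S_B)ⁿ` equals `2ⁿ + 1`. -/
theorem stmt_7 (n : ℕ) (hn : 1 ≤ n) :
    Nat.card (Quotient (Relation.EqvGen.setoid
      (fun x y : Fin n → Fin 3 =>
        ∃ m : Fin n → ZMod 6, ∑ i, m i = 0 ∧
          ∀ i, (Equiv.swap (1 : Fin 3) 2 ^ (m i).val) (x i) = y i))) =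
      2 ^ n + 1 :=
  SwapOrbits.card_quotient_rel hn
end

section
/- Let n ≥ 2 and let R = ℂ[x₁,…,xₙ,y₁,…,yₙ]/(y_i² + y_i − x_i³ : 1 ≤ i ≤ n) be the coordinate ring of the product of the n curves y_i² + y_i = x_i³. Let ζ₃ ∈ ℂ be a primitive cube root of unity, and for each k with 1 ≤ k ≤ n−1 let σ_k be the ℂ-algebra automorphism of R determined by σ_k(x_k) = ζ₃x_k, σ_k(xₙ) = ζ₃xₙ, σ_k(x_i) = x_i for i ∉ {k, n}, and σ_k(y_i) = y_i for all i. Then the subalgebra of elements of R fixed by σ₁,…,σ_{n−1} equals the ℂ-subalgebra of R generated by y₁, y₂, …, yₙ, x₁x₂⋯x_{n−1}xₙ², and x₁²x₂²⋯x_{n−1}²xₙ. -/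
/-! Each `σₖ` lifts to the diagonal substitution of `ℂ[x, y]` scaling `xₖ` and `xₙ` by `ζ`.
Averaging a preimage of an invariant over each of these order-3 substitutions keeps it a
preimage and kills every monomial `x^α y^β` except those with `3 ∣ αₖ + αₙ` for all `k`.
For such `α` the residues `α mod 3` are `0`, `(2,…,2,1)` or `(1,…,1,2)`, so the monomial is a
product of cubes `xᵢ³ = yᵢ² + yᵢ`, powers of the `yᵢ` and at most one of the two generators
`x₁⋯xₙ₋₁xₙ²`, `x₁²⋯xₙ₋₁²xₙ`. -/

open MvPolynomial

/-- The coordinate ring `R = ℂ[x₁,…,xₙ,y₁,…,yₙ]/(yᵢ² + yᵢ - xᵢ³ : 1 ≤ i ≤ n)` of the product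
of the `n` curves `yᵢ² + yᵢ = xᵢ³`.  The variable `Sum.inl i` is `xᵢ` and `Sum.inr i` is
`yᵢ`. -/
noncomputable abbrev cubicRing (n : ℕ) : Type :=
  MvPolynomial (Fin n ⊕ Fin n) ℂ ⧸
    Ideal.span (Set.range fun i : Fin n =>
      (X (Sum.inr i) : MvPolynomial (Fin n ⊕ Fin n) ℂ) ^ 2 + X (Sum.inr i) - X (Sum.inl i) ^ 3)

/-- The class of `xᵢ` in `R`. -/
noncomputable def xc (n : ℕ) (i : Fin n) : cubicRing n :=
  Ideal.Quotient.mk _ (X (Sum.inl i))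

/-- The class of `yᵢ` in `R`. -/
noncomputable def yc (n : ℕ) (i : Fin n) : cubicRing n :=
  Ideal.Quotient.mk _ (X (Sum.inr i))

section DiagonalSubstitution

variable {R σ : Type*} [CommSemiring R]

noncomputable def diagSubst (c : σ → R) : MvPolynomial σ R →ₐ[R] MvPolynomial σ R :=
  aeval fun v => C (c v) * X v

lemma diagSubst_monomial (c : σ → R) (a : σ →₀ ℕ) (b : R) :
    diagSubst c (monomial a b) = C (a.prod fun v e => c v ^ e) * monomial a b := by
  rw [diagSubst, aeval_monomial, monomial_eq, algebraMap_eq, map_finsuppProd]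
  simp only [mul_pow, Finsupp.prod_mul, C_pow]
  ring

lemma coeff_diagSubst (c : σ → R) (p : MvPolynomial σ R) (a : σ →₀ ℕ) :
    coeff a (diagSubst c p) = (a.prod fun v e => c v ^ e) * coeff a p := by
  induction p using MvPolynomial.induction_on' with
  | monomial b r =>
    classical
    rw [diagSubst_monomial, coeff_C_mul, coeff_monomial]
    split_ifs with h
    · rw [h]
    · simp
  | add p q hp hq => simp only [map_add, coeff_add, hp, hq, mul_add]

lemma map_diagSubst {B : Type*} [CommSemiring B] [Algebra R B] (c : σ → R)
    (f : MvPolynomial σ R →ₐ[R] B) (g : B →ₐ[R] B)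
    (hg : ∀ v, g (f (X v)) = algebraMap R B (c v) * f (X v)) (p : MvPolynomial σ R) :
    f (diagSubst c p) = g (f p) := by
  suffices f.comp (diagSubst c) = g.comp f from AlgHom.congr_fun this p
  refine algHom_ext fun v => ?_
  simp [diagSubst, hg]

end DiagonalSubstitution

section CubeAverage

variable {K σ : Type*} [Field K]

noncomputable def cubeAverage (c : σ → K) (p : MvPolynomial σ K) : MvPolynomial σ K :=
  C (3⁻¹ : K) * (p + diagSubst c p + diagSubst c (diagSubst c p))

lemma one_add_self_add_sq_eq_zero {ω : K} (h3 : ω ^ 3 = 1) (h1 : ω ≠ 1) :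
    1 + ω + ω ^ 2 = 0 := by
  have : (ω - 1) * (1 + ω + ω ^ 2) = 0 := by linear_combination h3
  exact (mul_eq_zero.1 this).resolve_left (sub_ne_zero.2 h1)

open scoped Classical in
lemma coeff_cubeAverage (h3 : (3 : K) ≠ 0) {c : σ → K} (hc : ∀ v, c v ^ 3 = 1)
    (p : MvPolynomial σ K) (a : σ →₀ ℕ) :
    coeff a (cubeAverage c p) = if (a.prod fun v e => c v ^ e) = 1 then coeff a p else 0 := by
  set ω := a.prod fun v e => c v ^ e
  have hω : ω ^ 3 = 1 := by
    simp only [ω, Finsupp.prod, ← Finset.prod_pow, ← pow_mul, pow_mul', hc, one_pow,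
      Finset.prod_const_one]
  have hcoeff : coeff a (cubeAverage c p) = 3⁻¹ * (1 + ω + ω ^ 2) * coeff a p := by
    simp only [cubeAverage, coeff_C_mul, coeff_add, coeff_diagSubst, ω]
    ring
  rw [hcoeff]
  split_ifs with h
  · rw [h]; field_simp; norm_num
  · rw [one_add_self_add_sq_eq_zero hω h]; ring

lemma map_cubeAverage_of_fixed {B : Type*} [CommRing B] [Algebra K B] (h3 : (3 : K) ≠ 0)
    {c : σ → K} (f : MvPolynomial σ K →ₐ[K] B) (g : B →ₐ[K] B)
    (hg : ∀ v, g (f (X v)) = algebraMap K B (c v) * f (X v)) {p : MvPolynomial σ K}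
    (hp : g (f p) = f p) : f (cubeAverage c p) = f p := by
  have h3B : algebraMap K B 3⁻¹ * 3 = 1 := by
    rw [← map_ofNat (algebraMap K B), ← map_mul, inv_mul_cancel₀ h3, map_one]
  simp only [cubeAverage, map_mul, map_add, map_diagSubst c f g hg, hp, algHom_C]
  linear_combination (f p) * h3B

end CubeAverage

section Invariants

variable {K σ ι B : Type*} [Field K] [CommRing B] [Algebra K B]

theorem exists_preimage_support_weight_eq_one (h3 : (3 : K) ≠ 0) (c : ι → σ → K)
    (hc : ∀ k v, c k v ^ 3 = 1) (f : MvPolynomial σ K →ₐ[K] B) (g : ι → B →ₐ[K] B)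
    (hg : ∀ k v, g k (f (X v)) = algebraMap K B (c k v) * f (X v)) (p : MvPolynomial σ K)
    (hp : ∀ k, g k (f p) = f p) (s : Finset ι) :
    ∃ q, f q = f p ∧ ∀ a ∈ q.support, ∀ k ∈ s, (a.prod fun v e => c k v ^ e) = 1 := by
  classical
  induction s using Finset.induction_on with
  | empty => exact ⟨p, rfl, by simp⟩
  | insert j s _ ih =>
    obtain ⟨q, hqp, hq⟩ := ih
    refine ⟨cubeAverage (c j) q, ?_, fun a ha k hk => ?_⟩
    · rw [map_cubeAverage_of_fixed h3 f (g j) (hg j) (by rw [hqp, hp]), hqp]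
    · rw [mem_support_iff, coeff_cubeAverage h3 (hc j)] at ha
      split_ifs at ha with hj
      · rcases Finset.mem_insert.1 hk with rfl | hk
        · exact hj
        · exact hq a (mem_support_iff.2 ha) k hk
      · exact absurd rfl ha

theorem mem_of_forall_map_eq_self [Fintype ι] (h3 : (3 : K) ≠ 0) (c : ι → σ → K)
    (hc : ∀ k v, c k v ^ 3 = 1) (f : MvPolynomial σ K →ₐ[K] B) (g : ι → B →ₐ[K] B)
    (hg : ∀ k v, g k (f (X v)) = algebraMap K B (c k v) * f (X v)) (A : Subalgebra K B)
    (hA : ∀ a : σ →₀ ℕ, (∀ k, (a.prod fun v e => c k v ^ e) = 1) → f (monomial a 1) ∈ A)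
    (p : MvPolynomial σ K) (hp : ∀ k, g k (f p) = f p) : f p ∈ A := by
  obtain ⟨q, hqp, hq⟩ :=
    exists_preimage_support_weight_eq_one h3 c hc f g hg p hp Finset.univ
  rw [← hqp, q.as_sum, map_sum]
  refine sum_mem fun a ha => ?_
  rw [← mul_one (coeff a q), ← smul_eq_mul, ← smul_monomial, map_smul]
  exact A.smul_mem (hA a fun k => hq a ha k (Finset.mem_univ k)) _

end Invariants

section Monomials

variable {ι M : Type*} [Fintype ι] [DecidableEq ι] [CommMonoid M]

lemma prod_erase_mul_pow_eq (x : ι → M) (N : ι) (a b : ℕ) :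
    (∏ i ∈ Finset.univ.erase N, x i ^ a) * x N ^ b = ∏ i, x i ^ (if i = N then b else a) := by
  rw [← Finset.prod_erase_mul _ _ (Finset.mem_univ N), if_pos rfl]
  congr 1
  exact Finset.prod_congr rfl fun i hi => by rw [if_neg (Finset.ne_of_mem_erase hi)]

lemma prod_ite_or_pow {i₀ N : ι} (h : i₀ ≠ N) (ζ : M) (α : ι → ℕ) :
    ∏ i, (if i = i₀ ∨ i = N then ζ else 1) ^ α i = ζ ^ (α i₀ + α N) := by
  calc ∏ i, (if i = i₀ ∨ i = N then ζ else 1) ^ α i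
      = ∏ i, if i ∈ ({i₀, N} : Finset ι) then ζ ^ α i else 1 := by simp [ite_pow]
    _ = ζ ^ (α i₀ + α N) := by
      rw [Finset.prod_ite_mem, Finset.univ_inter, Finset.prod_pair h, pow_add]

end Monomials

lemma Finsupp.prod_sumElim_one_pow {ι κ M : Type*} [Fintype ι] [Fintype κ] [CommMonoid M]
    (c : ι → M) (a : ι ⊕ κ →₀ ℕ) :
    (a.prod fun v e => Sum.elim c 1 v ^ e) = ∏ i, c i ^ a (Sum.inl i) := by
  simp [Finsupp.prod_pow, Fintype.prod_sum_type]

lemma AlgHom.map_prod_pow_of_map_eq {K B ι : Type*} [CommSemiring K] [CommSemiring B]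
    [Algebra K B] [Fintype ι] (g : B →ₐ[K] B) {x : ι → B} {c : ι → K}
    (hg : ∀ i, g (x i) = algebraMap K B (c i) * x i) (α : ι → ℕ) :
    g (∏ i, x i ^ α i) = algebraMap K B (∏ i, c i ^ α i) * ∏ i, x i ^ α i := by
  simp [hg, mul_pow, Finset.prod_mul_distrib]

lemma prod_pow_mem_of_dvd {S T ι : Type*} [CommSemiring S] [SetLike T S] [SubsemiringClass T S]
    [Fintype ι] [DecidableEq ι] {A : T} {x : ι → S} {N : ι} (hx : ∀ i, x i ^ 3 ∈ A)
    (h21 : ∏ i, x i ^ (if i = N then 1 else 2) ∈ A)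
    (h12 : ∏ i, x i ^ (if i = N then 2 else 1) ∈ A)
    {α : ι → ℕ} (hα : ∀ i ≠ N, 3 ∣ α i + α N) : ∏ i, x i ^ α i ∈ A := by
  have hsplit : ∏ i, x i ^ α i = (∏ i, (x i ^ 3) ^ (α i / 3)) * ∏ i, x i ^ (α i % 3) := by
    rw [← Finset.prod_mul_distrib]
    exact Finset.prod_congr rfl fun i _ => by rw [← pow_mul, ← pow_add, Nat.div_add_mod]
  have hmod : ∏ i, x i ^ (α i % 3)
      = ∏ i, x i ^ (if i = N then α N % 3 else (3 - α N % 3) % 3) := by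
    refine Finset.prod_congr rfl fun i _ => ?_
    split_ifs with hi
    · rw [hi]
    · have := hα i hi
      congr 1
      omega
  rw [hsplit, hmod]
  refine mul_mem (prod_mem fun i _ => pow_mem (hx i) _) ?_
  obtain h | h | h : α N % 3 = 0 ∨ α N % 3 = 1 ∨ α N % 3 = 2 := by omega
  all_goals simp only [h]
  · simp
  · exact h21
  · exact h12

lemma xc_pow_three (n : ℕ) (i : Fin n) : xc n i ^ 3 = yc n i ^ 2 + yc n i := by
  rw [xc, yc, ← map_pow, ← map_pow, ← map_add, Ideal.Quotient.eq, ← neg_sub, Ideal.neg_mem_iff]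
  exact Ideal.subset_span ⟨i, rfl⟩

lemma mk_monomial_one (n : ℕ) (a : Fin n ⊕ Fin n →₀ ℕ) :
    Ideal.Quotient.mk _ (monomial a (1 : ℂ)) =
      (∏ i, xc n i ^ a (Sum.inl i)) * ∏ i, yc n i ^ a (Sum.inr i) := by
  rw [monomial_eq, C_1, one_mul, Finsupp.prod_pow, map_prod, Fintype.prod_sum_type]
  simp [xc, yc]

noncomputable def cubicInvariants (n : ℕ) (N : Fin n) : Subalgebra ℂ (cubicRing n) :=
  Algebra.adjoin ℂ (Set.range (yc n) ∪
    {(∏ i ∈ Finset.univ.erase N, xc n i) * xc n N ^ 2,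
     (∏ i ∈ Finset.univ.erase N, xc n i ^ 2) * xc n N})

namespace cubicInvariants

variable {n : ℕ} {N : Fin n}

lemma yc_mem (i : Fin n) : yc n i ∈ cubicInvariants n N :=
  Algebra.subset_adjoin (Or.inl ⟨i, rfl⟩)

lemma prod_xc_pow_ite_mem (a b : ℕ) (hab : a = 1 ∧ b = 2 ∨ a = 2 ∧ b = 1) :
    ∏ i, xc n i ^ (if i = N then b else a) ∈ cubicInvariants n N := by
  rw [← prod_erase_mul_pow_eq]
  refine Algebra.subset_adjoin (Or.inr ?_)
  rcases hab with ⟨rfl, rfl⟩ | ⟨rfl, rfl⟩ <;> simp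

lemma prod_xc_pow_mem {α : Fin n → ℕ} (hα : ∀ i ≠ N, 3 ∣ α i + α N) :
    ∏ i, xc n i ^ α i ∈ cubicInvariants n N := by
  refine prod_pow_mem_of_dvd (fun i => ?_) (prod_xc_pow_ite_mem 2 1 (by simp))
    (prod_xc_pow_ite_mem 1 2 (by simp)) hα
  rw [xc_pow_three]
  exact add_mem (pow_mem (yc_mem i) 2) (yc_mem i)

lemma mk_monomial_mem {a : Fin n ⊕ Fin n →₀ ℕ} (ha : ∀ i ≠ N, 3 ∣ a (.inl i) + a (.inl N)) :
    Ideal.Quotient.mk _ (monomial a 1) ∈ cubicInvariants n N := by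
  rw [mk_monomial_one]
  exact mul_mem (prod_xc_pow_mem ha) (prod_mem fun i _ => pow_mem (yc_mem i) _)

lemma map_eq_self {i₀ : Fin n} (h : i₀ ≠ N) {ζ : ℂ} (hζ : ζ ^ 3 = 1)
    (g : cubicRing n →ₐ[ℂ] cubicRing n)
    (hgx : ∀ i, g (xc n i) = algebraMap ℂ _ (if i = i₀ ∨ i = N then ζ else 1) * xc n i)
    (hgy : ∀ i, g (yc n i) = yc n i) {r : cubicRing n} (hr : r ∈ cubicInvariants n N) :
    g r = r := by
  have hmono : ∀ a b : ℕ, a + b = 3 →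
      g ((∏ i ∈ Finset.univ.erase N, xc n i ^ a) * xc n N ^ b) =
        (∏ i ∈ Finset.univ.erase N, xc n i ^ a) * xc n N ^ b := by
    intro a b hab
    rw [prod_erase_mul_pow_eq, g.map_prod_pow_of_map_eq hgx, prod_ite_or_pow h, if_neg h,
      if_pos rfl, hab, hζ, map_one, one_mul]
  suffices cubicInvariants n N ≤ AlgHom.equalizer g (AlgHom.id ℂ _) from this hr
  refine Algebra.adjoin_le ?_
  rintro _ (⟨i, rfl⟩ | rfl | rfl) <;>
    simp only [SetLike.mem_coe, AlgHom.mem_equalizer, AlgHom.id_apply]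
  · exact hgy i
  · simpa only [pow_one] using hmono 1 2 rfl
  · simpa only [pow_one] using hmono 2 1 rfl

end cubicInvariants

/-- the subalgebra of elements of `R` fixed by the `ℂ`-algebra automorphisms
`σ₁, …, σ_{n-1}` (where `σₖ` multiplies `xₖ` and `xₙ` by a primitive cube root of unity `ζ`
and fixes the other variables) equals the `ℂ`-subalgebra generated by
`y₁, …, yₙ`, `x₁x₂⋯x_{n-1}xₙ²` and `x₁²x₂²⋯x_{n-1}²xₙ`. -/
theorem stmt_8 (n : ℕ) (hn : 2 ≤ n) (ζ : ℂ) (hζ : IsPrimitiveRoot ζ 3)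
    (σ : Fin (n - 1) → (cubicRing n ≃ₐ[ℂ] cubicRing n))
    (hσxk : ∀ k : Fin (n - 1),
      σ k (xc n (Fin.castLE (Nat.sub_le n 1) k)) =
        algebraMap ℂ (cubicRing n) ζ * xc n (Fin.castLE (Nat.sub_le n 1) k))
    (hσxn : ∀ k : Fin (n - 1),
      σ k (xc n ⟨n - 1, by omega⟩) = algebraMap ℂ (cubicRing n) ζ * xc n ⟨n - 1, by omega⟩)
    (hσxi : ∀ (k : Fin (n - 1)) (i : Fin n),
      i ≠ Fin.castLE (Nat.sub_le n 1) k → i ≠ ⟨n - 1, by omega⟩ → σ k (xc n i) = xc n i)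
    (hσy : ∀ (k : Fin (n - 1)) (i : Fin n), σ k (yc n i) = yc n i) :
    {r : cubicRing n | ∀ k, σ k r = r} =
      ↑(Algebra.adjoin ℂ (Set.range (yc n) ∪
        {(∏ i ∈ Finset.univ.erase (⟨n - 1, by omega⟩ : Fin n), xc n i) *
            xc n ⟨n - 1, by omega⟩ ^ 2,
         (∏ i ∈ Finset.univ.erase (⟨n - 1, by omega⟩ : Fin n), xc n i ^ 2) *
            xc n ⟨n - 1, by omega⟩})) := by
  set N : Fin n := ⟨n - 1, by omega⟩
  set incl := Fin.castLE (Nat.sub_le n 1)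
  have hinclN : ∀ k, incl k ≠ N := fun k => Fin.ne_of_val_ne k.isLt.ne
  set c : Fin (n - 1) → Fin n → ℂ := fun k i => if i = incl k ∨ i = N then ζ else 1
  have hσx : ∀ k i, σ k (xc n i) = algebraMap ℂ _ (c k i) * xc n i := by
    intro k i
    by_cases hk : i = incl k
    · simp [c, hk, hσxk]
    by_cases hN : i = N
    · simp [c, hN, hσxn]
    · simp [c, hk, hN, hσxi k i hk hN]
  change _ = (cubicInvariants n N : Set (cubicRing n))
  ext r
  refine ⟨fun hr => ?_, fun hr k =>
    cubicInvariants.map_eq_self (hinclN k) hζ.pow_eq_one (σ k : _ →ₐ[ℂ] _) (hσx k) (hσy k) hr⟩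
  obtain ⟨p, rfl⟩ := Ideal.Quotient.mkₐ_surjective ℂ _ r
  refine mem_of_forall_map_eq_self three_ne_zero (fun k => Sum.elim (c k) 1) ?_ _
    (fun k => (σ k : _ →ₐ[ℂ] _)) ?_ (cubicInvariants n N) ?_ p fun k => hr k
  · rintro k (i | i)
    · simp only [Sum.elim_inl, c, ite_pow, hζ.pow_eq_one, one_pow, ite_self]
    · simp
  · rintro k (i | i)
    · exact hσx k i
    · rw [Sum.elim_inr, Pi.one_apply, map_one, one_mul]
      exact hσy k i
  · intro a ha
    refine cubicInvariants.mk_monomial_mem fun i hi => ?_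
    obtain ⟨k, rfl⟩ : ∃ k, incl k = i :=
      ⟨⟨i, (Nat.le_sub_one_of_lt i.isLt).lt_of_ne (Fin.val_ne_of_ne hi)⟩, rfl⟩
    have := ha k
    rw [Finsupp.prod_sumElim_one_pow, prod_ite_or_pow (hinclN k)] at this
    exact (hζ.pow_eq_one_iff_dvd _).1 this
end
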